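/- Let λ = (λ_1,…,λ_m) be a partition of n, and let z be a nonzero element of the degree-2 part H² of R_λ with z² = 0 in R_λ. Then there is a unique index i ∈ {1,…,m} such that z lies in the ℤ-span of x_{i,1},…,x_{i,λ_i}. -/

import Mathlib

/-!
Context: for a partition λ = (λ_1,…,λ_m) of n (so λ_1 ≥ … ≥ λ_m ≥ 1 and
Σλ_i = n), let R_λ := ℤ[x_{i,j}]/(x_{i,1}², x_{i,j}² − x_{i,1}x_{i,j} for
2 ≤ j ≤ λ_i), the integral cohomology ring of the ℚ-trivial Bott manifold
𝓗_λ = 𝓗_{λ_1} × ⋯ × 𝓗_{λ_m}.  The degree-2 part H² of R_λ is the free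
abelian group with basis the images of all the x_{i,j}.

STATEMENT 8: Let z be a nonzero element of H² with z² = 0 in R_λ.  Then there
is a unique index i ∈ {1,…,m} such that z lies in the ℤ-span of
x_{i,1},…,x_{i,λ_i}.
-/

open MvPolynomial

noncomputable section

/-- The defining relations x_{i,1}², x_{i,j}² − x_{i,1}x_{i,j} (j ≥ 2) of R_λ. -/
def prel (m : ℕ) (lam : Fin m → ℕ) (p : Σ i : Fin m, Fin (lam i)) :
    MvPolynomial (Σ i : Fin m, Fin (lam i)) ℤ :=
  X p ^ 2 -
    (if p.2.val = 0 then 0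
      else X (⟨p.1, ⟨0, Nat.lt_of_le_of_lt (Nat.zero_le _) p.2.isLt⟩⟩ :
        Σ i : Fin m, Fin (lam i))) * X p

/-- R_λ, the integral cohomology ring of 𝓗_λ. -/
abbrev PRing (m : ℕ) (lam : Fin m → ℕ) : Type :=
  MvPolynomial (Σ i : Fin m, Fin (lam i)) ℤ ⧸ Ideal.span (Set.range (prel m lam))

/-- The image x_{i,j} of X (i,j) in R_λ. -/
def px (m : ℕ) (lam : Fin m → ℕ) (p : Σ i : Fin m, Fin (lam i)) : PRing m lam :=
  Ideal.Quotient.mk _ (X p)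

/-!
Coefficients of degree-2 elements can be read off by ring homomorphisms out of `R_λ`: sending
`x_p ↦ ε` and every other generator to `0` gives a map to the dual numbers `ℤ[ε]/(ε²)` whose
`ε`-part is the coefficient of `x_p`. For generators `x_p`, `x_q` in different factors, sending
`x_p ↦ a`, `x_q ↦ b` and the rest to `0` gives a map to `ℤ[a,b]/(a², b²)`, under which
`z² ↦ 2 c_p c_q ab`. Hence `z² = 0` forces the nonzero coefficients of `z` into a single factor,
and the first family of maps shows that this factor is unique.
-/

open TrivSqZeroExt DualNumber

/-- `DualNumber (DualNumber ℤ)` is `ℤ[a,b]/(a², b²)` with `a = ε` and `b = inl ε`. -/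
lemma mul_eq_zero_of_sq_zsmul_eps_add_zsmul_inl_eps_eq_zero {x y : ℤ}
    (h : (x • (ε : DualNumber (DualNumber ℤ)) + y • inl ε) ^ 2 = 0) : x * y = 0 := by
  have h' := congrArg (fun w : DualNumber (DualNumber ℤ) => w.snd.snd) h
  simp [sq] at h'
  linarith [mul_comm x y]

namespace PRing

variable {m : ℕ} {lam : Fin m → ℕ}

/-- Each defining relation of `R_λ` is a product of two generators of one factor, or a
difference of two such. -/
def lift {A : Type*} [CommRing A] (g : (Σ i : Fin m, Fin (lam i)) → A)
    (hg : ∀ p q, p.1 = q.1 → g p * g q = 0) : PRing m lam →+* A :=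
  Ideal.Quotient.lift _ (eval₂Hom (Int.castRingHom A) g) fun a ha => by
    refine (Ideal.span_le (I := RingHom.ker _)).mpr ?_ ha
    rintro _ ⟨p, rfl⟩
    have hpp : g p ^ 2 = 0 := (sq (g p)).trans (hg p p rfl)
    by_cases hp : p.2.val = 0
    · simp [prel, hp, hpp]
    · simpa [prel, hp, hpp] using hg ⟨p.1, ⟨0, by omega⟩⟩ p rfl

section lift

variable {A : Type*} [CommRing A] {g : (Σ i : Fin m, Fin (lam i)) → A}
  {hg : ∀ p q, p.1 = q.1 → g p * g q = 0}

lemma lift_px (p : Σ i : Fin m, Fin (lam i)) : lift g hg (px m lam p) = g p :=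
  (Ideal.Quotient.lift_mk _ _ _).trans (eval₂Hom_X' _ _ _)

lemma lift_sum_zsmul_px (c : (Σ i : Fin m, Fin (lam i)) → ℤ) :
    lift g hg (∑ r, c r • px m lam r) = ∑ r, c r • g r := by
  simp only [map_sum, map_zsmul, lift_px]

end lift

def coeff (p : Σ i : Fin m, Fin (lam i)) : PRing m lam →ₗ[ℤ] ℤ :=
  (sndHom ℤ ℤ).comp (lift (Pi.single p (ε : DualNumber ℤ)) fun r s _ => by
    simp only [Pi.single_apply]
    split_ifs <;> simp).toIntAlgHom.toLinearMap

lemma coeff_px (p r : Σ i : Fin m, Fin (lam i)) :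
    coeff p (px m lam r) = Pi.single (M := fun _ ↦ ℤ) p 1 r := by
  simp only [coeff, Pi.single_apply, LinearMap.comp_apply, AlgHom.toLinearMap_apply,
    RingHom.toIntAlgHom_apply, lift_px, sndHom_apply]
  split_ifs <;> simp

lemma coeff_sum_zsmul_px (p : Σ i : Fin m, Fin (lam i)) (c : (Σ i : Fin m, Fin (lam i)) → ℤ) :
    coeff p (∑ r, c r • px m lam r) = c p := by
  simp only [map_sum, map_zsmul, coeff_px]
  simp [Pi.single_apply]

lemma coeff_eq_zero_of_mem_span_factor {p : Σ i : Fin m, Fin (lam i)} {i : Fin m} (hp : p.1 ≠ i)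
    {z : PRing m lam}
    (hz : z ∈ Submodule.span ℤ (Set.range fun j : Fin (lam i) => px m lam ⟨i, j⟩)) :
    coeff p z = 0 := by
  refine (Submodule.span_le (p := LinearMap.ker (coeff p))).mpr ?_ hz
  rintro _ ⟨j, rfl⟩
  have : (⟨i, j⟩ : Σ i : Fin m, Fin (lam i)) ≠ p := fun h => hp (congrArg Sigma.fst h).symm
  simp [coeff_px, this]

def toDualDual (p q : Σ i : Fin m, Fin (lam i)) (hpq : p.1 ≠ q.1) :
    PRing m lam →+* DualNumber (DualNumber ℤ) :=
  lift (Pi.single p ε + Pi.single q (inl ε)) fun r s hrs => by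
    have hb : (inl ε : DualNumber (DualNumber ℤ)) * inl ε = 0 := by
      rw [← inl_mul, eps_mul_eps, inl_zero]
    simp only [Pi.add_apply, Pi.single_apply]
    split_ifs <;> subst_vars <;> simp_all

lemma mul_eq_zero_of_sq_sum_zsmul_px_eq_zero (c : (Σ i : Fin m, Fin (lam i)) → ℤ)
    (hsq : (∑ r, c r • px m lam r) ^ 2 = 0) {p q : Σ i : Fin m, Fin (lam i)} (hpq : p.1 ≠ q.1) :
    c p * c q = 0 := by
  have h := congrArg (toDualDual p q hpq) hsq
  rw [map_pow, toDualDual, lift_sum_zsmul_px, map_zero] at h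
  refine mul_eq_zero_of_sq_zsmul_eps_add_zsmul_inl_eps_eq_zero (Eq.trans ?_ h)
  simp [Pi.single_apply, Finset.sum_add_distrib]

lemma sum_zsmul_px_mem_span_factor {c : (Σ i : Fin m, Fin (lam i)) → ℤ} {i : Fin m}
    (hc : ∀ r, c r ≠ 0 → r.1 = i) :
    ∑ r, c r • px m lam r ∈ Submodule.span ℤ (Set.range fun j : Fin (lam i) => px m lam ⟨i, j⟩) := by
  refine Submodule.sum_mem _ fun ⟨k, j⟩ _ => ?_
  by_cases hr : c ⟨k, j⟩ = 0
  · simp [hr]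
  · obtain rfl : k = i := hc _ hr
    exact Submodule.smul_mem _ _ (Submodule.subset_span ⟨j, rfl⟩)

end PRing

open PRing

theorem square_zero_lies_in_factor (m : ℕ) (lam : Fin m → ℕ)
    (z : PRing m lam)
    (hz : z ∈ Submodule.span ℤ (Set.range (px m lam)))
    (hz0 : z ≠ 0) (hsq : z ^ 2 = 0) :
    ∃! i : Fin m,
      z ∈ Submodule.span ℤ (Set.range fun j : Fin (lam i) => px m lam ⟨i, j⟩) := by
  obtain ⟨c, rfl⟩ := (Submodule.mem_span_range_iff_exists_fun ℤ).mp hz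
  obtain ⟨p, hp⟩ : ∃ p, c p ≠ 0 := by
    by_contra! h
    exact hz0 (by simp [h])
  have hfactor : ∀ r, c r ≠ 0 → r.1 = p.1 := fun r hr => by
    by_contra hne
    exact mul_ne_zero hp hr (mul_eq_zero_of_sq_sum_zsmul_px_eq_zero c hsq (Ne.symm hne))
  refine ⟨p.1, sum_zsmul_px_mem_span_factor hfactor, fun i hi => ?_⟩
  by_contra hne
  have hcoeff := coeff_eq_zero_of_mem_span_factor (Ne.symm hne) hi
  rw [coeff_sum_zsmul_px] at hcoeff
  exact hp hcoeff

end
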